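/- Let π = (n_1,…,n_m) (m ≥ 2) be a partition of n, 0 < ρ ≤ 1, and O, O' ∈ O(P_m) with O' weak equivalent to O via a chain O = O_0, O_1, …, O_r = O' in which every two adjacent terms are equivalent or shift-equivalent, and in which exactly d pairs of adjacent terms are shift-equivalent. If μ_{π,ρ} is a constant (depending only on π and ρ) such that ‖J‖₂ ≤ μ_{π,ρ} for all block Jacobi operators J ∈ J_O^{UBC_π(ρ)}, then for any d+1 block Jacobi operators J_1', J_2', …, J_{d+1}' ∈ J_{O'}^{UBC_π(ρ)} one has ‖J_1' J_2' ⋯ J_{d+1}'‖₂ ≤ μ_{π,ρ}, where ‖·‖₂ denotes the spectral norm. -/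

import Mathlib

namespace BlockJacobi

open scoped BigOperators

attribute [local instance] Classical.propDecidable

noncomputable section

/-- Offset (starting index) of block `r` for the partition `c`. -/
def off (c : ℕ → ℕ) (r : ℕ) : ℕ := ∑ k ∈ Finset.range r, c k

/-- `t` belongs to block `r`. -/
def inBlk (c : ℕ → ℕ) (r t : ℕ) : Prop := off c r ≤ t ∧ t < off c r + c r

/-- `s` and `t` belong to the same block (among the first `m` blocks). -/
def sameBlk (c : ℕ → ℕ) (m s t : ℕ) : Prop := ∃ r, r < m ∧ inBlk c r s ∧ inBlk c r t

/-- `t` belongs to the pivot zone: block `i` or block `j`. -/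
def inPiv (c : ℕ → ℕ) (i j t : ℕ) : Prop := inBlk c i t ∨ inBlk c j t

/-- `(c, m)` is a partition of `n` into `m` blocks (0-based blocks `0,…,m-1`). -/
def IsPartition (n m : ℕ) (c : ℕ → ℕ) : Prop :=
  2 ≤ m ∧ (∀ i < m, 1 ≤ c i) ∧ ∑ i ∈ Finset.range m, c i = n

/-- elementary block matrix with (0-based) pivot pair `(i,j)`. -/
def IsElem {n : ℕ} (c : ℕ → ℕ) (i j : ℕ) (U : Matrix (Fin n) (Fin n) ℝ) : Prop :=
  ∀ s t : Fin n, ¬(inPiv c i j (s : ℕ) ∧ inPiv c i j (t : ℕ)) →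
    U s t = if s = t then 1 else 0

/-- orthogonality. -/
def Orth {n : ℕ} (U : Matrix (Fin n) (Fin n) ℝ) : Prop := U.transpose * U = 1

/-- Euclidean norm of a vector. -/
def enorm {ι : Type*} [Fintype ι] (x : ι → ℝ) : ℝ := Real.sqrt (∑ i, x i ^ 2)

/-- smallest singular value of the `(r,r)` diagonal block of `U`. -/
def sigmaMinBlk {n : ℕ} (c : ℕ → ℕ) (r : ℕ) (U : Matrix (Fin n) (Fin n) ℝ) : ℝ :=
  sInf { v : ℝ | ∃ x : Fin n → ℝ,
    (∀ t : Fin n, ¬ inBlk c r (t : ℕ) → x t = 0) ∧ enorm x = 1 ∧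
    enorm (fun t : Fin n => if inBlk c r (t : ℕ) then U.mulVec x t else 0) = v }

/-- the constant `γ_{ij}` of the UBC class. -/
def gammaUBC (c : ℕ → ℕ) (i j : ℕ) : ℝ :=
  3 / Real.sqrt (((4 : ℝ) ^ c i + 6 * (c j : ℝ) - 1) * ((c j : ℝ) + 1))

/-- `U` is in the UBC class with pivot pair `(i,j)`: block structure given by `cs`,
`γ`-bound computed from the partition `cg`. -/
def IsUBC2 {n : ℕ} (cs cg : ℕ → ℕ) (ρ : ℝ) (i j : ℕ) (U : Matrix (Fin n) (Fin n) ℝ) : Prop :=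
  IsElem cs i j U ∧ Orth U ∧ sigmaMinBlk cs i U = sigmaMinBlk cs j U ∧
    ρ * gammaUBC cg i j ≤ sigmaMinBlk cs i U

/-- `U ∈ UBC_π(ρ)` with pivot pair `(i,j)`. -/
def IsUBC {n : ℕ} (c : ℕ → ℕ) (ρ : ℝ) (i j : ℕ) (U : Matrix (Fin n) (Fin n) ℝ) : Prop :=
  IsUBC2 c c ρ i j U

/-- the `(i,j)` pivot submatrix of `A` is diagonal. -/
def PivDiag {n : ℕ} (c : ℕ → ℕ) (i j : ℕ) (A : Matrix (Fin n) (Fin n) ℝ) : Prop :=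
  ∀ s t : Fin n, s ≠ t → inPiv c i j (s : ℕ) → inPiv c i j (t : ℕ) → A s t = 0

/-- square of the off-norm `S(A)`. -/
def offSq {n : ℕ} (A : Matrix (Fin n) (Fin n) ℝ) : ℝ :=
  ∑ s : Fin n, ∑ t : Fin n, if (s : ℕ) < (t : ℕ) then A s t ^ 2 else 0

/-- square of the off-norm of the `(i,j)` pivot submatrix of `A`. -/
def offSqPiv {n : ℕ} (c : ℕ → ℕ) (i j : ℕ) (A : Matrix (Fin n) (Fin n) ℝ) : ℝ :=
  ∑ s : Fin n, ∑ t : Fin n,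
    if (s : ℕ) < (t : ℕ) ∧ inPiv c i j (s : ℕ) ∧ inPiv c i j (t : ℕ) then A s t ^ 2 else 0

/-- Frobenius norm. -/
def frob {n : ℕ} (A : Matrix (Fin n) (Fin n) ℝ) : ℝ :=
  Real.sqrt (∑ s : Fin n, ∑ t : Fin n, A s t ^ 2)

/-- One sweep of the block Jacobi method along the pivot list `L`; block structure from
`cs`, UBC bound computed from the partition `cg`. -/
def Sweep2 {n : ℕ} (cs cg : ℕ → ℕ) (ρ : ℝ) (L : List (ℕ × ℕ))
    (A A' : Matrix (Fin n) (Fin n) ℝ) : Prop :=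
  ∃ B : ℕ → Matrix (Fin n) (Fin n) ℝ,
    B 0 = A ∧ B L.length = A' ∧
    ∀ (k : ℕ) (hk : k < L.length),
      ∃ U : Matrix (Fin n) (Fin n) ℝ,
        IsUBC2 cs cg ρ (L.get ⟨k, hk⟩).1 (L.get ⟨k, hk⟩).2 U ∧
        B (k + 1) = U.transpose * B k * U ∧
        PivDiag cs (L.get ⟨k, hk⟩).1 (L.get ⟨k, hk⟩).2 (B (k + 1))

/-- One sweep of the block Jacobi method with `UBC_π(ρ)` transformations. -/
def Sweep {n : ℕ} (c : ℕ → ℕ) (ρ : ℝ) (L : List (ℕ × ℕ))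
    (A A' : Matrix (Fin n) (Fin n) ℝ) : Prop :=
  Sweep2 c c ρ L A A'

/-- `L ∈ O(P_m)` (0-based pairs). -/
def SeqOn (m : ℕ) (L : List (ℕ × ℕ)) : Prop :=
  (∀ p ∈ L, p.1 < p.2 ∧ p.2 < m) ∧ ∀ i j : ℕ, i < j → j < m → (i, j) ∈ L

/-- `L ∈ O(S)` for `S ⊆ P_m`. -/
def SeqOnSet (S : Set (ℕ × ℕ)) (L : List (ℕ × ℕ)) : Prop :=
  (∀ p ∈ L, p ∈ S) ∧ ∀ p ∈ S, p ∈ L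

/-- the class `B_c^(m)` of column-wise orderings (0-based). -/
def memBc (m : ℕ) (L : List (ℕ × ℕ)) : Prop :=
  ∃ τ : ℕ → ℕ → ℕ,
    (∀ j, Set.BijOn (τ j) (Set.Iio j) (Set.Iio j)) ∧
    L = (List.range' 1 (m - 1)).flatMap fun j => (List.range j).map fun a => (τ j a, j)

/-- the class `B_r^(m)` of row-wise orderings (0-based). -/
def memBr (m : ℕ) (L : List (ℕ × ℕ)) : Prop :=
  ∃ σ : ℕ → ℕ → ℕ,
    (∀ i, Set.BijOn (σ i) (Set.Ico (i + 1) m) (Set.Ico (i + 1) m)) ∧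
    L = ((List.range (m - 1)).reverse).flatMap fun i =>
      (List.range' (i + 1) (m - 1 - i)).map fun b => (i, σ i b)

/-- the class `B_sp^(m)` of serial orderings with permutations. -/
def memBsp (m : ℕ) (L : List (ℕ × ℕ)) : Prop :=
  memBc m L ∨ memBc m L.reverse ∨ memBr m L ∨ memBr m L.reverse

/-- the quasi-cyclic class `B̄_c^(m)`. -/
def memBcQ (m : ℕ) (L : List (ℕ × ℕ)) : Prop :=
  ∃ (τ : ℕ → ℕ → ℕ) (E : ℕ → List (ℕ × ℕ)),
    (∀ j, Set.BijOn (τ j) (Set.Iio j) (Set.Iio j)) ∧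
    (∀ j, ∀ p ∈ E j, p.1 < p.2 ∧ p.2 ≤ j) ∧
    L = (List.range' 1 (m - 1)).flatMap fun j =>
      ((List.range j).map fun a => (τ j a, j)) ++ (if j = 1 then [] else E j)

/-- one admissible transposition (on lists of `α`'s carrying pairs via `pr`). -/
def AdjSwapG {α : Type*} (pr : α → ℕ × ℕ) (L L' : List α) : Prop :=
  ∃ (l₁ l₂ : List α) (a b : α),
    ({(pr a).1, (pr a).2} ∩ {(pr b).1, (pr b).2} : Set ℕ) = ∅ ∧
    L = l₁ ++ a :: b :: l₂ ∧ L' = l₁ ++ b :: a :: l₂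

/-- equivalence (finitely many admissible transpositions). -/
def EquivG {α : Type*} (pr : α → ℕ × ℕ) : List α → List α → Prop :=
  Relation.ReflTransGen (AdjSwapG pr)

/-- shift-equivalence. -/
def ShiftG {α : Type*} (L L' : List α) : Prop :=
  ∃ l₁ l₂ : List α, L = l₁ ++ l₂ ∧ L' = l₂ ++ l₁

/-- weak equivalence. -/
def WeakG {α : Type*} (pr : α → ℕ × ℕ) : List α → List α → Prop :=
  Relation.ReflTransGen fun X Y => EquivG pr X Y ∨ ShiftG X Y

/-- equivalence of pivot sequences. -/
def PEquivL : List (ℕ × ℕ) → List (ℕ × ℕ) → Prop := EquivG id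

/-- shift-equivalence of pivot sequences. -/
def ShiftEq : List (ℕ × ℕ) → List (ℕ × ℕ) → Prop := ShiftG

/-- weak equivalence of pivot sequences. -/
def WeakEq : List (ℕ × ℕ) → List (ℕ × ℕ) → Prop := WeakG id

/-- weak equivalence realized by a chain containing exactly `d` shift-equivalent
adjacent pairs (all other adjacent pairs being equivalent). -/
def WeakChainD (d : ℕ) (L L' : List (ℕ × ℕ)) : Prop :=
  ∃ (r : ℕ) (cs : ℕ → List (ℕ × ℕ)) (s : Finset ℕ),
    cs 0 = L ∧ cs r = L' ∧ s.card = d ∧ (∀ k ∈ s, k < r) ∧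
    ∀ k < r, if k ∈ s then ShiftEq (cs k) (cs (k + 1)) else PEquivL (cs k) (cs (k + 1))

/-- `q` is a permutation of `{0,…,m-1}`. -/
def IsPermOn (m : ℕ) (q : ℕ → ℕ) : Prop := Set.BijOn q (Set.Iio m) (Set.Iio m)

/-- `O(q)`: apply a permutation to all pairs of the sequence. -/
def pApply (q : ℕ → ℕ) (L : List (ℕ × ℕ)) : List (ℕ × ℕ) :=
  L.map fun p => if q p.1 < q p.2 then (q p.1, q p.2) else (q p.2, q p.1)

/-- `compSeq q t = q_t ∘ q_{t-1} ∘ ⋯ ∘ q_1`. -/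
def compSeq (q : ℕ → ℕ → ℕ) : ℕ → ℕ → ℕ
  | 0 => id
  | t + 1 => q (t + 1) ∘ compSeq q t

/-- the class `B_spg^(m)`. -/
def memBspg (m : ℕ) (L : List (ℕ × ℕ)) : Prop :=
  ∃ L' L'' : List (ℕ × ℕ), memBsp m L'' ∧
    ((∃ q, IsPermOn m q ∧ L' = pApply q L) ∧ PEquivL L' L'' ∨
      PEquivL L L' ∧ ∃ q, IsPermOn m q ∧ L'' = pApply q L')

/-- the class `B_sg^(m)` of generalized serial orderings. -/
def memBsg (m : ℕ) (L : List (ℕ × ℕ)) : Prop :=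
  ∃ L' L'' : List (ℕ × ℕ), memBsp m L'' ∧
    ((∃ q, IsPermOn m q ∧ L' = pApply q L) ∧ WeakEq L' L'' ∨
      WeakEq L L' ∧ ∃ q, IsPermOn m q ∧ L'' = pApply q L')

/-- index set of the entries of the off-diagonal blocks in the upper triangle;
it has cardinality `K`. -/
def OffI (n m : ℕ) (c : ℕ → ℕ) : Type :=
  { p : Fin n × Fin n // (p.1 : ℕ) < (p.2 : ℕ) ∧ ¬ sameBlk c m (p.1 : ℕ) (p.2 : ℕ) }

instance (n m : ℕ) (c : ℕ → ℕ) : Fintype (OffI n m c) := by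
  unfold OffI; exact Subtype.fintype _

instance (n m : ℕ) (c : ℕ → ℕ) : DecidableEq (OffI n m c) := Classical.decEq _

/-- `vec_{π,0}⁻¹` : the symmetric matrix with zero diagonal blocks built from a vector. -/
def symOf {n m : ℕ} {c : ℕ → ℕ} (a : OffI n m c → ℝ) : Matrix (Fin n) (Fin n) ℝ :=
  fun s t =>
    if h : (s : ℕ) < (t : ℕ) ∧ ¬ sameBlk c m (s : ℕ) (t : ℕ) then a ⟨(s, t), h⟩
    else if h' : (t : ℕ) < (s : ℕ) ∧ ¬ sameBlk c m (t : ℕ) (s : ℕ) then a ⟨(t, s), h'⟩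
    else 0

/-- `N_{ij}` : set the pivot submatrix to zero. -/
def nij {n : ℕ} (c : ℕ → ℕ) (i j : ℕ) (M : Matrix (Fin n) (Fin n) ℝ) :
    Matrix (Fin n) (Fin n) ℝ :=
  fun s t => if inPiv c i j (s : ℕ) ∧ inPiv c i j (t : ℕ) then 0 else M s t

/-- the block Jacobi annihilator `R_{ij}(Û)` (as a `K×K` matrix), parametrized by the
full elementary block matrix `U` with pivot pair `(i,j)` and pivot submatrix `Û`. -/
def annih (n m : ℕ) (c : ℕ → ℕ) (i j : ℕ) (U : Matrix (Fin n) (Fin n) ℝ) :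
    Matrix (OffI n m c) (OffI n m c) ℝ :=
  fun p q => nij c i j (U.transpose * symOf (Pi.single q (1 : ℝ)) * U) p.1.1 p.1.2

/-- the class `I_{ij}` of block Jacobi annihilators. -/
def Iij (n m : ℕ) (c : ℕ → ℕ) (i j : ℕ) : Set (Matrix (OffI n m c) (OffI n m c) ℝ) :=
  { R | ∃ U : Matrix (Fin n) (Fin n) ℝ, IsElem c i j U ∧ Orth U ∧ R = annih n m c i j U }

/-- the class `I_{ij}^{UBC(ρ)}`. -/
def IijUBC (n m : ℕ) (c : ℕ → ℕ) (ρ : ℝ) (i j : ℕ) :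
    Set (Matrix (OffI n m c) (OffI n m c) ℝ) :=
  { R | ∃ U : Matrix (Fin n) (Fin n) ℝ, IsUBC c ρ i j U ∧ R = annih n m c i j U }

/-- the class `J_O^{UBC_π(ρ)}` of block Jacobi operators. -/
def JopUBC (n m : ℕ) (c : ℕ → ℕ) (ρ : ℝ) (L : List (ℕ × ℕ)) :
    Set (Matrix (OffI n m c) (OffI n m c) ℝ) :=
  { J | ∃ R : ℕ → Matrix (OffI n m c) (OffI n m c) ℝ,
      (∀ (k : ℕ) (hk : k < L.length),
        R k ∈ IijUBC n m c ρ (L.get ⟨k, hk⟩).1 (L.get ⟨k, hk⟩).2) ∧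
      J = (((List.range L.length).reverse).map R).prod }

/-- spectral norm (operator 2-norm). -/
def specNorm {ι : Type*} [Fintype ι] (M : Matrix ι ι ℝ) : ℝ :=
  sSup { v : ℝ | ∃ x : ι → ℝ, enorm x = 1 ∧ enorm (M.mulVec x) = v }

/-- spectral radius. -/
def specRad {ι : Type*} [Fintype ι] (M : Matrix ι ι ℝ) : ℝ :=
  sSup { v : ℝ | ∃ (μ : ℂ) (x : ι → ℂ), x ≠ 0 ∧
    (M.map (fun r : ℝ => (r : ℂ))).mulVec x = μ • x ∧ v = ‖μ‖ }

/-- product `R_{T-1} ⋯ R_1 R_0` of a decorated pivot list. -/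
def prodD {n m : ℕ} {c : ℕ → ℕ}
    (L : List ((ℕ × ℕ) × Matrix (OffI n m c) (OffI n m c) ℝ)) :
    Matrix (OffI n m c) (OffI n m c) ℝ :=
  ((L.map Prod.snd).reverse).prod

/-- plane (Givens) rotation in the `(i,j)` coordinate plane. -/
def rotM (n : ℕ) (i j : ℕ) (φ : ℝ) : Matrix (Fin n) (Fin n) ℝ :=
  fun s t =>
    if (s : ℕ) = i ∧ (t : ℕ) = i then Real.cos φ
    else if (s : ℕ) = j ∧ (t : ℕ) = j then Real.cos φ
    else if (s : ℕ) = i ∧ (t : ℕ) = j then - Real.sin φ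
    else if (s : ℕ) = j ∧ (t : ℕ) = i then Real.sin φ
    else if s = t then 1 else 0

/-- One sweep of the scalar (element-wise) cyclic Jacobi method with rotation
angles in `[-π/4, π/4]`. -/
def ScalarSweep {n : ℕ} (L : List (ℕ × ℕ)) (A A' : Matrix (Fin n) (Fin n) ℝ) : Prop :=
  ∃ (B : ℕ → Matrix (Fin n) (Fin n) ℝ) (φ : ℕ → ℝ),
    B 0 = A ∧ B L.length = A' ∧
    ∀ (k : ℕ) (hk : k < L.length),
      |φ k| ≤ Real.pi / 4 ∧
      B (k + 1) =
        (rotM n (L.get ⟨k, hk⟩).1 (L.get ⟨k, hk⟩).2 (φ k)).transpose * B k *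
          rotM n (L.get ⟨k, hk⟩).1 (L.get ⟨k, hk⟩).2 (φ k) ∧
      ∀ s t : Fin n, (s : ℕ) = (L.get ⟨k, hk⟩).1 → (t : ℕ) = (L.get ⟨k, hk⟩).2 →
        B (k + 1) s t = 0

/-- `k` concatenated copies of a list. -/
def iterList {α : Type*} : ℕ → List α → List α
  | 0, _ => []
  | k + 1, L => L ++ iterList k L


/-!
Every annihilator `R_ij(Û)` is a contraction for `‖·‖₂`: conjugation by an orthogonal matrix
preserves the Frobenius norm, `N_ij` can only decrease it, and `vec_{π,0}⁻¹` multiplies it by `√2`.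
Annihilators with disjoint pivot pairs commute, so `J_O` does not change under an admissible
transposition. If `O = [O₁, O₂]` and `O' = [O₂, O₁]`, every `J' ∈ J_{O'}` factors as `Y X` with
`X ∈ J_{O₂}`, `Y ∈ J_{O₁}`, and `Y₀ X₀ Y₁ X₁ ⋯ Y_k X_k = Y₀ (X₀ Y₁) ⋯ (X_{k-1} Y_k) X_k` is a
product of `k` operators from `J_O` between two contractions. Each of the `d` shifts of the chain
thus uses up one factor, and the product of `d + 1` operators from `J_{O'}` becomes `A J B` with
`J ∈ J_O` and `‖A‖₂, ‖B‖₂ ≤ 1`.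
-/

open Matrix

section SpectralNorm

variable {ι : Type*} [Fintype ι]

lemma enorm_eq_norm_toLp (x : ι → ℝ) : enorm x = ‖WithLp.toLp 2 x‖ := by
  simp [enorm, EuclideanSpace.norm_eq]

lemma enorm_mulVec_ofLp (M : Matrix ι ι ℝ) (x : EuclideanSpace ℝ ι) :
    enorm (M *ᵥ x.ofLp) = ‖Matrix.toEuclideanCLM (𝕜 := ℝ) M x‖ := by
  rw [enorm_eq_norm_toLp, ← Matrix.ofLp_toEuclideanCLM, WithLp.toLp_ofLp]

lemma specNorm_eq_norm_toEuclideanCLM (M : Matrix ι ι ℝ) :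
    specNorm M = ‖Matrix.toEuclideanCLM (𝕜 := ℝ) M‖ := by
  rw [← ContinuousLinearMap.sSup_sphere_eq_norm, specNorm]
  congr 1
  ext v
  constructor
  · rintro ⟨x, hx, rfl⟩
    refine ⟨WithLp.toLp 2 x, by simpa [← enorm_eq_norm_toLp] using hx, ?_⟩
    simp [enorm_eq_norm_toLp]
  · rintro ⟨x, hx, rfl⟩
    exact ⟨x.ofLp, by simpa [enorm_eq_norm_toLp] using hx, enorm_mulVec_ofLp M x⟩

lemma specNorm_nonneg (M : Matrix ι ι ℝ) : 0 ≤ specNorm M := by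
  rw [specNorm_eq_norm_toEuclideanCLM]
  exact norm_nonneg _

lemma specNorm_mul_le (M N : Matrix ι ι ℝ) : specNorm (M * N) ≤ specNorm M * specNorm N := by
  simp only [specNorm_eq_norm_toEuclideanCLM, map_mul]
  exact norm_mul_le _ _

lemma specNorm_le_one_of_enorm_mulVec_le {M : Matrix ι ι ℝ}
    (h : ∀ x, enorm (M *ᵥ x) ≤ enorm x) : specNorm M ≤ 1 := by
  rw [specNorm_eq_norm_toEuclideanCLM]
  refine ContinuousLinearMap.opNorm_le_bound _ zero_le_one fun x => ?_
  rw [one_mul, ← enorm_mulVec_ofLp, ← WithLp.toLp_ofLp (p := 2) x, ← enorm_eq_norm_toLp]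
  exact h x.ofLp

lemma specNorm_one_le : specNorm (1 : Matrix ι ι ℝ) ≤ 1 :=
  specNorm_le_one_of_enorm_mulVec_le fun x => by simp

lemma specNorm_mul_le_one {M N : Matrix ι ι ℝ} (hM : specNorm M ≤ 1) (hN : specNorm N ≤ 1) :
    specNorm (M * N) ≤ 1 :=
  (specNorm_mul_le M N).trans (mul_le_one₀ hM (specNorm_nonneg N) hN)

lemma specNorm_list_prod_le_one {Ms : List (Matrix ι ι ℝ)} (h : ∀ M ∈ Ms, specNorm M ≤ 1) :
    specNorm Ms.prod ≤ 1 := by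
  induction Ms with
  | nil => exact specNorm_one_le
  | cons M Ms ih =>
    rw [List.prod_cons]
    exact specNorm_mul_le_one (h M List.mem_cons_self)
      (ih fun N hN => h N (List.mem_cons_of_mem M hN))

lemma specNorm_mul_mul_le {A J B : Matrix ι ι ℝ} (hA : specNorm A ≤ 1) (hB : specNorm B ≤ 1) :
    specNorm (A * J * B) ≤ specNorm J :=
  calc specNorm (A * J * B) ≤ specNorm A * specNorm J * specNorm B :=
        (specNorm_mul_le _ B).trans (mul_le_mul_of_nonneg_right (specNorm_mul_le A J)
          (specNorm_nonneg B))
    _ ≤ 1 * specNorm J * 1 := by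
        have := specNorm_nonneg J
        have := specNorm_nonneg B
        gcongr
    _ = specNorm J := by ring

end SpectralNorm

section Blocks

variable {c : ℕ → ℕ} {m : ℕ}

lemma off_add_le_off (c : ℕ → ℕ) {r r' : ℕ} (h : r < r') : off c r + c r ≤ off c r' := by
  rw [off, ← Finset.sum_range_succ]
  exact Finset.sum_le_sum_of_subset (Finset.range_subset_range.2 h)

lemma inBlk_unique {r r' t : ℕ} (h : inBlk c r t) (h' : inBlk c r' t) : r = r' := by
  by_contra hne
  rcases lt_or_gt_of_ne hne with hlt | hlt
  · exact absurd (h.2.trans_le (off_add_le_off c hlt)) (not_lt.2 h'.1)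
  · exact absurd (h'.2.trans_le (off_add_le_off c hlt)) (not_lt.2 h.1)

lemma not_inPiv_of_disjoint {i j k l t : ℕ} (hd : ({i, j} ∩ {k, l} : Set ℕ) = ∅)
    (h : inPiv c i j t) : ¬ inPiv c k l t := by
  intro h'
  have key : ∀ r ∈ ({i, j} : Set ℕ), ∀ r' ∈ ({k, l} : Set ℕ), inBlk c r t → ¬ inBlk c r' t :=
    fun r hr r' hr' hb hb' => by
      have hmem : r ∈ ({i, j} ∩ {k, l} : Set ℕ) := ⟨hr, inBlk_unique hb hb' ▸ hr'⟩
      rwa [hd] at hmem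
  rcases h with hb | hb <;> rcases h' with hb' | hb' <;> exact key _ (by simp) _ (by simp) hb hb'

lemma sameBlk_comm {s t : ℕ} : sameBlk c m s t ↔ sameBlk c m t s :=
  ⟨fun ⟨r, hr, h1, h2⟩ => ⟨r, hr, h2, h1⟩, fun ⟨r, hr, h1, h2⟩ => ⟨r, hr, h2, h1⟩⟩

lemma inPiv_iff_of_sameBlk {i j s t : ℕ} (h : sameBlk c m s t) :
    inPiv c i j s ↔ inPiv c i j t := by
  obtain ⟨r, -, hs, ht⟩ := h
  constructor <;> rintro (h | h)
  · exact Or.inl (inBlk_unique hs h ▸ ht)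
  · exact Or.inr (inBlk_unique hs h ▸ ht)
  · exact Or.inl (inBlk_unique ht h ▸ hs)
  · exact Or.inr (inBlk_unique ht h ▸ hs)

end Blocks

section PivotZone

variable {n : ℕ} {c : ℕ → ℕ} {i j k l : ℕ}

def pivProj (c : ℕ → ℕ) (i j : ℕ) : Matrix (Fin n) (Fin n) ℝ :=
  Matrix.diagonal fun t => if inPiv c i j t then 1 else 0

lemma nij_eq_sub_pivProj (M : Matrix (Fin n) (Fin n) ℝ) :
    nij c i j M = M - pivProj c i j * M * pivProj c i j := by
  ext s t
  simp only [nij, pivProj, Matrix.sub_apply, Matrix.diagonal_mul, Matrix.mul_diagonal]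
  split_ifs <;> simp_all

lemma nij_add (M N : Matrix (Fin n) (Fin n) ℝ) :
    nij c i j (M + N) = nij c i j M + nij c i j N := by
  simp only [nij_eq_sub_pivProj, Matrix.mul_add, Matrix.add_mul]
  abel

lemma nij_sub (M N : Matrix (Fin n) (Fin n) ℝ) :
    nij c i j (M - N) = nij c i j M - nij c i j N := by
  simp only [nij_eq_sub_pivProj, Matrix.mul_sub, Matrix.sub_mul]
  abel

lemma nij_comm (M : Matrix (Fin n) (Fin n) ℝ) :
    nij c i j (nij c k l M) = nij c k l (nij c i j M) := by
  ext s t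
  simp only [nij]
  split_ifs <;> rfl

lemma nij_transpose (M : Matrix (Fin n) (Fin n) ℝ) :
    (nij c i j M)ᵀ = nij c i j Mᵀ := by
  ext s t
  simp only [nij, Matrix.transpose_apply, and_comm]

end PivotZone

section Vectorization

variable {n m : ℕ} {c : ℕ → ℕ}

/-- The map `vec_π` of the paper. -/
def vecPi (Y : Matrix (Fin n) (Fin n) ℝ) : OffI n m c → ℝ := fun p => Y p.1.1 p.1.2

lemma symOf_add (a b : OffI n m c → ℝ) : symOf (a + b) = symOf a + symOf b := by
  ext s t
  simp only [symOf, Matrix.add_apply]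
  split_ifs <;> first | rfl | simp

lemma symOf_smul (r : ℝ) (a : OffI n m c → ℝ) : symOf (r • a) = r • symOf a := by
  ext s t
  simp only [symOf, Matrix.smul_apply]
  split_ifs <;> first | rfl | simp

lemma symOf_transpose (a : OffI n m c → ℝ) : (symOf a)ᵀ = symOf a := by
  ext s t
  simp only [symOf, Matrix.transpose_apply]
  split_ifs <;> first | rfl | omega

lemma vecPi_symOf (a : OffI n m c → ℝ) : vecPi (symOf a) = a := by
  funext p
  simp only [vecPi, symOf, dif_pos p.2]
  rfl

lemma symOf_apply_eq_zero (a : OffI n m c → ℝ) {s t : Fin n}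
    (h : (s : ℕ) = t ∨ sameBlk c m s t) : symOf a s t = 0 := by
  simp only [symOf]
  split_ifs with h₁ h₂
  · exact absurd (h.resolve_left h₁.1.ne) h₁.2
  · exact absurd (sameBlk_comm.1 (h.resolve_left h₂.1.ne')) h₂.2
  · rfl

lemma symOf_vecPi_apply {Y : Matrix (Fin n) (Fin n) ℝ} (hY : Yᵀ = Y) {s t : Fin n}
    (h : ¬ ((s : ℕ) = t ∨ sameBlk c m s t)) : symOf (vecPi (m := m) (c := c) Y) s t = Y s t := by
  simp only [symOf, vecPi]
  split_ifs with h₁ h₂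
  · rfl
  · exact congrFun (congrFun hY s) t
  · rw [sameBlk_comm] at h₂
    rcases lt_trichotomy (s : ℕ) t with hst | hst | hst
    · exact absurd ⟨hst, fun hb => h (Or.inr hb)⟩ h₁
    · exact absurd (Or.inl hst) h
    · exact absurd ⟨hst, fun hb => h (Or.inr hb)⟩ h₂

def annihMap (i j : ℕ) (U : Matrix (Fin n) (Fin n) ℝ) :
    (OffI n m c → ℝ) →ₗ[ℝ] (OffI n m c → ℝ) where
  toFun a := vecPi (nij c i j (Uᵀ * symOf a * U))
  map_add' a b := by
    ext p
    simp [vecPi, symOf_add, Matrix.mul_add, Matrix.add_mul, nij_add]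
  map_smul' r a := by
    ext p
    simp only [vecPi, nij, symOf_smul, Matrix.mul_smul, Matrix.smul_mul, Matrix.smul_apply,
      RingHom.id_apply, Pi.smul_apply]
    split_ifs <;> simp

lemma annih_eq_toMatrix' (i j : ℕ) (U : Matrix (Fin n) (Fin n) ℝ) :
    annih n m c i j U = LinearMap.toMatrix' (annihMap i j U) := by
  ext p q
  rw [LinearMap.toMatrix'_apply]
  rfl

lemma annih_mulVec (i j : ℕ) (U : Matrix (Fin n) (Fin n) ℝ) (a : OffI n m c → ℝ) :
    annih n m c i j U *ᵥ a = vecPi (nij c i j (Uᵀ * symOf a * U)) := by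
  rw [annih_eq_toMatrix', LinearMap.toMatrix'_mulVec]
  rfl

end Vectorization

section Frobenius

variable {n m : ℕ} {c : ℕ → ℕ}

lemma sum_offI_eq_sum_ite (g : Fin n → Fin n → ℝ) :
    ∑ p : OffI n m c, g p.1.1 p.1.2
      = ∑ s : Fin n, ∑ t : Fin n, if (s : ℕ) < t ∧ ¬ sameBlk c m s t then g s t else 0 := by
  rw [← Fintype.sum_prod_type'
    (f := fun (s t : Fin n) => if (s : ℕ) < t ∧ ¬ sameBlk c m s t then g s t else 0),
    ← Finset.sum_filter]
  exact (Finset.sum_subtype (p := fun x : Fin n × Fin n => (x.1 : ℕ) < x.2 ∧ ¬ sameBlk c m x.1 x.2)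
    _ (fun x => by simp) (fun x => g x.1 x.2)).symm

/-- Every entry not on a block diagonal lies in exactly one of the two triangles indexed by
`OffI`. -/
lemma sum_sum_eq_sum_offI_add (f : Fin n → Fin n → ℝ) :
    ∑ s, ∑ t, f s t = ∑ p : OffI n m c, (f p.1.1 p.1.2 + f p.1.2 p.1.1)
      + ∑ s : Fin n, ∑ t : Fin n, if (s : ℕ) = t ∨ sameBlk c m s t then f s t else 0 := by
  rw [Finset.sum_add_distrib, sum_offI_eq_sum_ite f, sum_offI_eq_sum_ite (fun s t => f t s),
    Finset.sum_comm
      (f := fun (t s : Fin n) => if (t : ℕ) < s ∧ ¬ sameBlk c m t s then f s t else 0),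
    ← Finset.sum_add_distrib, ← Finset.sum_add_distrib]
  refine Finset.sum_congr rfl fun s _ => ?_
  rw [← Finset.sum_add_distrib, ← Finset.sum_add_distrib]
  refine Finset.sum_congr rfl fun t _ => ?_
  rw [sameBlk_comm (s := (t : ℕ))]
  by_cases hb : sameBlk c m s t <;> simp only [hb, not_true, not_false_eq_true, and_true,
    and_false, or_true, or_false, if_true, if_false] <;> try split_ifs
  all_goals first | (exfalso; omega) | ring

lemma sum_sq_conj_of_orth {U : Matrix (Fin n) (Fin n) ℝ} (hU : Orth U)
    (M : Matrix (Fin n) (Fin n) ℝ) :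
    ∑ s, ∑ t, (Uᵀ * M * U) s t ^ 2 = ∑ s, ∑ t, M s t ^ 2 := by
  have sum_sq_eq_trace : ∀ X : Matrix (Fin n) (Fin n) ℝ, ∑ s, ∑ t, X s t ^ 2 = (Xᵀ * X).trace :=
    fun X => by
      rw [Matrix.trace, Finset.sum_comm]
      simp [Matrix.mul_apply, sq]
  have hU' : U * Uᵀ = 1 := mul_eq_one_comm.1 hU
  rw [sum_sq_eq_trace, sum_sq_eq_trace, Matrix.transpose_mul, Matrix.transpose_mul,
    Matrix.transpose_transpose]
  calc (Uᵀ * (Mᵀ * U) * (Uᵀ * M * U)).trace = (Uᵀ * (Mᵀ * (U * Uᵀ) * M) * U).trace := by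
        simp only [Matrix.mul_assoc]
    _ = (Mᵀ * M).trace := by
        rw [hU', Matrix.mul_one, Matrix.trace_mul_cycle, hU', Matrix.one_mul]

lemma frob_conj_of_orth {U : Matrix (Fin n) (Fin n) ℝ} (hU : Orth U)
    (M : Matrix (Fin n) (Fin n) ℝ) : frob (Uᵀ * M * U) = frob M := by
  rw [frob, frob, sum_sq_conj_of_orth hU]

lemma frob_nij_le {i j : ℕ} (M : Matrix (Fin n) (Fin n) ℝ) : frob (nij c i j M) ≤ frob M := by
  refine Real.sqrt_le_sqrt (Finset.sum_le_sum fun s _ => Finset.sum_le_sum fun t _ => ?_)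
  simp only [nij]
  split_ifs <;> simp [sq_nonneg]

lemma frob_symOf (a : OffI n m c → ℝ) : frob (symOf a) = √2 * enorm a := by
  rw [frob, enorm, ← Real.sqrt_mul zero_le_two, sum_sum_eq_sum_offI_add (m := m) (c := c),
    Finset.mul_sum]
  congr 1
  rw [Finset.sum_eq_zero fun s _ => Finset.sum_eq_zero fun t _ => ?_, add_zero]
  · refine Finset.sum_congr rfl fun p _ => ?_
    rw [← Matrix.transpose_apply (symOf a) p.1.1, symOf_transpose]
    change vecPi (symOf a) p ^ 2 + vecPi (symOf a) p ^ 2 = _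
    rw [vecPi_symOf]
    ring
  · split_ifs with h
    · rw [symOf_apply_eq_zero a h]; simp
    · rfl

lemma sqrt_two_mul_enorm_vecPi_le {X : Matrix (Fin n) (Fin n) ℝ} (hX : Xᵀ = X) :
    √2 * enorm (vecPi (m := m) (c := c) X) ≤ frob X := by
  rw [frob, enorm, ← Real.sqrt_mul zero_le_two, sum_sum_eq_sum_offI_add (m := m) (c := c),
    Finset.mul_sum]
  refine Real.sqrt_le_sqrt (le_add_of_le_of_nonneg (le_of_eq ?_) ?_)
  · refine Finset.sum_congr rfl fun p _ => ?_
    rw [← Matrix.transpose_apply X p.1.1, hX, vecPi]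
    ring
  · exact Finset.sum_nonneg fun s _ => Finset.sum_nonneg fun t _ => by
      split_ifs <;> positivity

end Frobenius

section Contraction

variable {n m : ℕ} {c : ℕ → ℕ} {i j : ℕ} {U : Matrix (Fin n) (Fin n) ℝ}

lemma nij_conj_symOf_transpose (a : OffI n m c → ℝ) :
    (nij c i j (Uᵀ * symOf a * U))ᵀ = nij c i j (Uᵀ * symOf a * U) := by
  rw [nij_transpose, Matrix.transpose_mul, Matrix.transpose_mul, Matrix.transpose_transpose,
    symOf_transpose, Matrix.mul_assoc]

lemma enorm_annih_mulVec_le (hU : Orth U) (a : OffI n m c → ℝ) :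
    enorm (annih n m c i j U *ᵥ a) ≤ enorm a := by
  rw [annih_mulVec]
  have h : √2 * enorm (vecPi (m := m) (c := c) (nij c i j (Uᵀ * symOf a * U))) ≤ √2 * enorm a :=
    calc _ ≤ frob (nij c i j (Uᵀ * symOf a * U)) :=
          sqrt_two_mul_enorm_vecPi_le (nij_conj_symOf_transpose a)
      _ ≤ frob (Uᵀ * symOf a * U) := frob_nij_le _
      _ = frob (symOf a) := frob_conj_of_orth hU _
      _ = √2 * enorm a := frob_symOf a
  exact le_of_mul_le_mul_left h (by positivity)

lemma specNorm_annih_le_one (hU : Orth U) : specNorm (annih n m c i j U) ≤ 1 :=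
  specNorm_le_one_of_enorm_mulVec_le (enorm_annih_mulVec_le hU)

end Contraction

section Commutation

variable {n m : ℕ} {c : ℕ → ℕ} {i j k l : ℕ} {U V : Matrix (Fin n) (Fin n) ℝ}

lemma IsElem.apply_of_not_inPiv_right (hU : IsElem c i j U) {t : Fin n}
    (ht : ¬ inPiv c i j t) (s : Fin n) : U s t = if s = t then 1 else 0 :=
  hU s t fun h => ht h.2

lemma IsElem.apply_of_not_inPiv_left (hU : IsElem c i j U) {s : Fin n}
    (hs : ¬ inPiv c i j s) (t : Fin n) : U s t = if s = t then 1 else 0 :=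
  hU s t fun h => hs h.1

lemma IsElem.mul_pivProj (hU : IsElem c i j U) (hd : ∀ t, inPiv c i j t → ¬ inPiv c k l t) :
    U * pivProj c k l = pivProj c k l := by
  ext s t
  simp only [pivProj, Matrix.mul_diagonal, Matrix.diagonal_apply]
  by_cases h : inPiv c k l t
  · rw [hU.apply_of_not_inPiv_right (fun h' => hd t h' h)]
    rcases eq_or_ne s t with rfl | hst <;> simp [*]
  · rcases eq_or_ne s t with rfl | hst <;> simp [*]

lemma IsElem.pivProj_mul (hU : IsElem c i j U) (hd : ∀ t, inPiv c i j t → ¬ inPiv c k l t) :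
    pivProj c k l * U = pivProj c k l := by
  ext s t
  simp only [pivProj, Matrix.diagonal_mul, Matrix.diagonal_apply]
  by_cases h : inPiv c k l s
  · rw [hU.apply_of_not_inPiv_left (fun h' => hd s h' h)]
    rcases eq_or_ne s t with rfl | hst <;> simp [*]
  · rcases eq_or_ne s t with rfl | hst <;> simp [*]

lemma IsElem.conj_nij (hU : IsElem c i j U) (hd : ∀ t, inPiv c i j t → ¬ inPiv c k l t)
    (M : Matrix (Fin n) (Fin n) ℝ) : Uᵀ * nij c k l M * U = nij c k l (Uᵀ * M * U) := by
  set P : Matrix (Fin n) (Fin n) ℝ := pivProj c k l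
  have hP : Pᵀ = P := Matrix.diagonal_transpose _
  have hUtP : Uᵀ * P = P := by rw [← hP, ← Matrix.transpose_mul, hU.pivProj_mul hd]
  have hPUt : P * Uᵀ = P := by rw [← hP, ← Matrix.transpose_mul, hU.mul_pivProj hd]
  rw [nij_eq_sub_pivProj, nij_eq_sub_pivProj, Matrix.mul_sub, Matrix.sub_mul]
  congr 1
  calc Uᵀ * (P * M * P) * U = (Uᵀ * P) * M * (P * U) := by simp only [Matrix.mul_assoc]
    _ = (P * Uᵀ) * M * (U * P) := by rw [hUtP, hPUt, hU.pivProj_mul hd, hU.mul_pivProj hd]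
    _ = P * (Uᵀ * M * U) * P := by simp only [Matrix.mul_assoc]

lemma IsElem.sub_one_mul_sub_one (hU : IsElem c i j U) (hV : IsElem c k l V)
    (hd : ∀ t, inPiv c i j t → ¬ inPiv c k l t) : (U - 1) * (V - 1) = 0 := by
  ext s t
  rw [Matrix.mul_apply, Matrix.zero_apply]
  refine Finset.sum_eq_zero fun r _ => ?_
  simp only [Matrix.sub_apply, Matrix.one_apply]
  by_cases hr : inPiv c i j r
  · rw [hV.apply_of_not_inPiv_left (hd r hr), sub_self, mul_zero]
  · rw [hU.apply_of_not_inPiv_right hr, sub_self, zero_mul]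

lemma IsElem.mul_comm (hU : IsElem c i j U) (hV : IsElem c k l V)
    (hd : ∀ t, inPiv c i j t → ¬ inPiv c k l t) : U * V = V * U := by
  have hUV := hU.sub_one_mul_sub_one hV hd
  have hVU := hV.sub_one_mul_sub_one hU fun t h h' => hd t h' h
  calc U * V = (U - 1) * (V - 1) + U + V - 1 := by noncomm_ring
    _ = (V - 1) * (U - 1) + V + U - 1 := by rw [hUV, hVU]; abel
    _ = V * U := by noncomm_ring

lemma conj_conj_of_commute (hUV : U * V = V * U) (M : Matrix (Fin n) (Fin n) ℝ) :
    Uᵀ * (Vᵀ * M * V) * U = Vᵀ * (Uᵀ * M * U) * V :=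
  calc Uᵀ * (Vᵀ * M * V) * U = (V * U)ᵀ * M * (V * U) := by
        simp only [Matrix.transpose_mul, Matrix.mul_assoc]
    _ = (U * V)ᵀ * M * (U * V) := by rw [hUV]
    _ = Vᵀ * (Uᵀ * M * U) * V := by simp only [Matrix.transpose_mul, Matrix.mul_assoc]

/-- `D` vanishes off the diagonal blocks (and, outside the `m` blocks, off the diagonal). -/
def IsBlockDiag (c : ℕ → ℕ) (m : ℕ) (D : Matrix (Fin n) (Fin n) ℝ) : Prop :=
  ∀ s t : Fin n, D s t ≠ 0 → (s : ℕ) = t ∨ sameBlk c m s t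

lemma IsBlockDiag.transpose {D : Matrix (Fin n) (Fin n) ℝ} (hD : IsBlockDiag c m D) :
    IsBlockDiag c m Dᵀ := fun s t h =>
  (hD t s h).imp (fun h => h.symm) sameBlk_comm.1

lemma IsElem.conj_apply_of_isBlockDiag (hU : IsElem c i j U) {D : Matrix (Fin n) (Fin n) ℝ}
    (hD : IsBlockDiag c m D) {s : Fin n} (hs : ¬ inPiv c i j s) (t : Fin n) :
    (Uᵀ * D * U) s t = D s t := by
  have hrow : (Uᵀ * D) s = D s := by
    funext b
    simp [Matrix.mul_apply, hU.apply_of_not_inPiv_right hs]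
  rw [Matrix.mul_apply, hrow]
  have hterm : ∀ b, D s b * U b t = if b = t then D s b else 0 := fun b => by
    by_cases hDb : D s b = 0
    · simp [hDb]
    have hb : ¬ inPiv c i j b := by
      rcases hD s b hDb with h | h
      · rwa [← Fin.ext h]
      · rwa [← inPiv_iff_of_sameBlk h]
    rw [hU.apply_of_not_inPiv_left hb]
    split_ifs <;> simp
  simp [hterm]

lemma IsElem.vecPi_nij_conj_eq_zero (hU : IsElem c i j U) {D : Matrix (Fin n) (Fin n) ℝ}
    (hD : IsBlockDiag c m D) : vecPi (m := m) (c := c) (nij c i j (Uᵀ * D * U)) = 0 := by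
  funext p
  have hp : D p.1.1 p.1.2 = 0 := by
    by_contra hne
    rcases hD _ _ hne with h | h
    · exact p.2.1.ne h
    · exact p.2.2 h
  simp only [vecPi, nij, Pi.zero_apply]
  split_ifs with h
  · rfl
  rcases not_and_or.1 h with hs | ht
  · rw [hU.conj_apply_of_isBlockDiag hD hs, hp]
  · rw [← Matrix.transpose_apply (Uᵀ * D * U), Matrix.transpose_mul, Matrix.transpose_mul,
      Matrix.transpose_transpose, ← Matrix.mul_assoc, hU.conj_apply_of_isBlockDiag hD.transpose ht,
      Matrix.transpose_apply, hp]

lemma isBlockDiag_symOf_vecPi_sub {Y : Matrix (Fin n) (Fin n) ℝ} (hY : Yᵀ = Y) :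
    IsBlockDiag c m (symOf (vecPi (m := m) (c := c) Y) - Y) := fun s t h => by
  by_contra hst
  exact h (by rw [Matrix.sub_apply, symOf_vecPi_apply hY hst, sub_self])

/-- Only the off-diagonal blocks of the matrix being transformed matter. -/
lemma IsElem.vecPi_nij_conj_symOf_vecPi (hU : IsElem c i j U) {Y : Matrix (Fin n) (Fin n) ℝ}
    (hY : Yᵀ = Y) :
    vecPi (m := m) (c := c) (nij c i j (Uᵀ * symOf (vecPi (m := m) (c := c) Y) * U))
      = vecPi (nij c i j (Uᵀ * Y * U)) := by
  have h := hU.vecPi_nij_conj_eq_zero (isBlockDiag_symOf_vecPi_sub (m := m) (c := c) hY)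
  rw [Matrix.mul_sub, Matrix.sub_mul, nij_sub] at h
  exact sub_eq_zero.1 h

lemma annih_mul_annih_comm (hU : IsElem c i j U) (hV : IsElem c k l V)
    (hd : ∀ t, inPiv c i j t → ¬ inPiv c k l t) :
    annih n m c i j U * annih n m c k l V = annih n m c k l V * annih n m c i j U := by
  have hd' : ∀ t, inPiv c k l t → ¬ inPiv c i j t := fun t h h' => hd t h' h
  simp only [annih_eq_toMatrix', ← LinearMap.toMatrix'_comp]
  refine congrArg _ (LinearMap.ext fun a => ?_)
  simp only [LinearMap.comp_apply, annihMap, LinearMap.coe_mk, AddHom.coe_mk]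
  rw [hU.vecPi_nij_conj_symOf_vecPi (nij_conj_symOf_transpose a),
    hV.vecPi_nij_conj_symOf_vecPi (nij_conj_symOf_transpose a), hU.conj_nij hd, hV.conj_nij hd',
    nij_comm, conj_conj_of_commute (hU.mul_comm hV hd)]

end Commutation

section JacobiOperators

variable {n m : ℕ} {c : ℕ → ℕ} {ρ : ℝ}

lemma forall₂_append_left_iff {α β : Type*} {R : α → β → Prop} {l₁ l₂ : List α} {u : List β} :
    List.Forall₂ R (l₁ ++ l₂) u ↔
      ∃ u₁ u₂, u = u₁ ++ u₂ ∧ List.Forall₂ R l₁ u₁ ∧ List.Forall₂ R l₂ u₂ := by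
  constructor
  · intro h
    refine ⟨u.take l₁.length, u.drop l₁.length, (List.take_append_drop _ _).symm, ?_, ?_⟩
    · simpa using List.forall₂_take l₁.length h
    · simpa using List.forall₂_drop l₁.length h
  · rintro ⟨u₁, u₂, rfl, h₁, h₂⟩
    exact List.rel_append h₁ h₂

lemma mem_JopUBC_iff {L : List (ℕ × ℕ)} {J : Matrix (OffI n m c) (OffI n m c) ℝ} :
    J ∈ JopUBC n m c ρ L ↔ ∃ Rs : List (Matrix (OffI n m c) (OffI n m c) ℝ),
      List.Forall₂ (fun p R => R ∈ IijUBC n m c ρ p.1 p.2) L Rs ∧ J = Rs.reverse.prod := by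
  constructor
  · rintro ⟨R, hR, rfl⟩
    refine ⟨(List.range L.length).map R, ?_, by rw [List.map_reverse]⟩
    refine List.forall₂_iff_get.2 ⟨by simp, fun k h₁ h₂ => ?_⟩
    simpa using hR k h₁
  · rintro ⟨Rs, hF, rfl⟩
    have hlen : L.length = Rs.length := hF.length_eq
    refine ⟨fun k => if h : k < Rs.length then Rs[k] else 1, fun k hk => ?_, ?_⟩
    · simpa [dif_pos (hlen ▸ hk)] using hF.get hk (hlen ▸ hk)
    · rw [List.map_reverse, hlen]
      congr 2
      exact List.ext_getElem (by simp) fun k h₁ _ => by simp [h₁]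

lemma mem_JopUBC_cons {p : ℕ × ℕ} {L : List (ℕ × ℕ)} {J : Matrix (OffI n m c) (OffI n m c) ℝ} :
    J ∈ JopUBC n m c ρ (p :: L) ↔
      ∃ R ∈ IijUBC n m c ρ p.1 p.2, ∃ J' ∈ JopUBC n m c ρ L, J = J' * R := by
  simp only [mem_JopUBC_iff, List.forall₂_cons_left_iff]
  constructor
  · rintro ⟨_, ⟨R, Rs, hR, hF, rfl⟩, rfl⟩
    exact ⟨R, hR, _, ⟨Rs, hF, rfl⟩, by simp⟩
  · rintro ⟨R, hR, _, ⟨Rs, hF, rfl⟩, rfl⟩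
    exact ⟨R :: Rs, ⟨R, Rs, hR, hF, rfl⟩, by simp⟩

lemma mem_JopUBC_append {l₁ l₂ : List (ℕ × ℕ)} {J : Matrix (OffI n m c) (OffI n m c) ℝ} :
    J ∈ JopUBC n m c ρ (l₁ ++ l₂) ↔
      ∃ A ∈ JopUBC n m c ρ l₁, ∃ B ∈ JopUBC n m c ρ l₂, J = B * A := by
  simp only [mem_JopUBC_iff, forall₂_append_left_iff]
  constructor
  · rintro ⟨_, ⟨u₁, u₂, rfl, h₁, h₂⟩, rfl⟩
    exact ⟨_, ⟨u₁, h₁, rfl⟩, _, ⟨u₂, h₂, rfl⟩, by simp⟩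
  · rintro ⟨_, ⟨u₁, h₁, rfl⟩, _, ⟨u₂, h₂, rfl⟩, rfl⟩
    exact ⟨u₁ ++ u₂, ⟨u₁, u₂, rfl, h₁, h₂⟩, by simp⟩

lemma specNorm_le_one_of_mem_JopUBC {L : List (ℕ × ℕ)} {J : Matrix (OffI n m c) (OffI n m c) ℝ}
    (hJ : J ∈ JopUBC n m c ρ L) : specNorm J ≤ 1 := by
  obtain ⟨R, hR, rfl⟩ := hJ
  refine specNorm_list_prod_le_one fun M hM => ?_
  obtain ⟨k, hk, rfl⟩ := List.mem_map.1 hM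
  obtain ⟨U, hU, hRk⟩ := hR k (by simpa using hk)
  exact hRk ▸ specNorm_annih_le_one hU.2.1

lemma commute_of_mem_IijUBC {p q : ℕ × ℕ} (hpq : ({p.1, p.2} ∩ {q.1, q.2} : Set ℕ) = ∅)
    {R S : Matrix (OffI n m c) (OffI n m c) ℝ} (hR : R ∈ IijUBC n m c ρ p.1 p.2)
    (hS : S ∈ IijUBC n m c ρ q.1 q.2) : R * S = S * R := by
  obtain ⟨U, hU, rfl⟩ := hR
  obtain ⟨V, hV, rfl⟩ := hS
  exact annih_mul_annih_comm hU.1 hV.1 fun t => not_inPiv_of_disjoint hpq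

lemma AdjSwapG.symm {α : Type*} {pr : α → ℕ × ℕ} {L L' : List α} (h : AdjSwapG pr L L') :
    AdjSwapG pr L' L := by
  obtain ⟨l₁, l₂, a, b, hab, rfl, rfl⟩ := h
  exact ⟨l₁, l₂, b, a, by rwa [Set.inter_comm], rfl, rfl⟩

lemma JopUBC_subset_of_adjSwap {L L' : List (ℕ × ℕ)} (h : AdjSwapG id L L') :
    JopUBC n m c ρ L ⊆ JopUBC n m c ρ L' := by
  obtain ⟨l₁, l₂, a, b, hab, rfl, rfl⟩ := h
  intro J hJ
  obtain ⟨A, hA, B, hB, rfl⟩ := mem_JopUBC_append.1 hJ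
  obtain ⟨Ra, hRa, B', hB', rfl⟩ := mem_JopUBC_cons.1 hB
  obtain ⟨Rb, hRb, C, hC, rfl⟩ := mem_JopUBC_cons.1 hB'
  refine mem_JopUBC_append.2 ⟨A, hA, C * Ra * Rb,
    mem_JopUBC_cons.2 ⟨Rb, hRb, C * Ra, mem_JopUBC_cons.2 ⟨Ra, hRa, C, hC, rfl⟩, rfl⟩, ?_⟩
  rw [Matrix.mul_assoc C Rb Ra, ← commute_of_mem_IijUBC hab hRa hRb, ← Matrix.mul_assoc]

lemma JopUBC_eq_of_pEquivL {L L' : List (ℕ × ℕ)} (h : PEquivL L L') :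
    JopUBC n m c ρ L = JopUBC n m c ρ L' := by
  induction h with
  | refl => rfl
  | tail _ hs ih =>
    exact ih.trans (subset_antisymm (JopUBC_subset_of_adjSwap hs)
      (JopUBC_subset_of_adjSwap hs.symm))

end JacobiOperators

section WeakEquivalence

variable {n m : ℕ} {c : ℕ → ℕ} {ρ : ℝ}

lemma list_prod_range_mul_eq {M : Type*} [Monoid M] (f g : ℕ → M) (d : ℕ) :
    ((List.range (d + 1)).map fun k => f k * g k).prod
      = f 0 * ((List.range d).map fun k => g k * f (k + 1)).prod * g d := by
  induction d with
  | zero => simp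
  | succ d ih =>
    rw [List.prod_range_succ, ih, List.prod_range_succ]
    simp only [mul_assoc]

/-- With `Js k = Y k * X k`, `Y k ∈ J_{l₁}`, `X k ∈ J_{l₂}`, the product regroups as
`Y 0 * ∏ (X k * Y (k + 1)) * X (e + 1)`. -/
lemma exists_prod_eq_mul_prod_mul_of_append {l₁ l₂ : List (ℕ × ℕ)} {e : ℕ}
    {Js : ℕ → Matrix (OffI n m c) (OffI n m c) ℝ}
    (hJs : ∀ k ≤ e + 1, Js k ∈ JopUBC n m c ρ (l₂ ++ l₁)) :
    ∃ (A B : Matrix (OffI n m c) (OffI n m c) ℝ) (Js' : ℕ → Matrix (OffI n m c) (OffI n m c) ℝ),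
      specNorm A ≤ 1 ∧ specNorm B ≤ 1 ∧ (∀ k ≤ e, Js' k ∈ JopUBC n m c ρ (l₁ ++ l₂)) ∧
      ((List.range (e + 2)).map Js).prod = A * ((List.range (e + 1)).map Js').prod * B := by
  have hsplit : ∀ k, ∃ Y X, k ≤ e + 1 →
      Y ∈ JopUBC n m c ρ l₁ ∧ X ∈ JopUBC n m c ρ l₂ ∧ Js k = Y * X := fun k => by
    by_cases hk : k ≤ e + 1
    · obtain ⟨X, hX, Y, hY, h⟩ := mem_JopUBC_append.1 (hJs k hk)
      exact ⟨Y, X, fun _ => ⟨hY, hX, h⟩⟩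
    · exact ⟨1, 1, fun h => absurd h hk⟩
  choose Y X hYX using hsplit
  refine ⟨Y 0, X (e + 1), fun k => X k * Y (k + 1),
    specNorm_le_one_of_mem_JopUBC (hYX 0 (by omega)).1,
    specNorm_le_one_of_mem_JopUBC (hYX (e + 1) le_rfl).2.1,
    fun k hk => mem_JopUBC_append.2 ⟨_, (hYX (k + 1) (by omega)).1, _, (hYX k (by omega)).2.1, rfl⟩,
    ?_⟩
  rw [← list_prod_range_mul_eq]
  congr 1
  refine List.map_congr_left fun k hk => (hYX k ?_).2.2
  have := List.mem_range.1 hk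
  omega

lemma exists_prod_eq_mul_mul_of_chain (cs : ℕ → List (ℕ × ℕ)) (s : Finset ℕ) (r : ℕ)
    (hstep : ∀ k < r,
      if k ∈ s then ShiftEq (cs k) (cs (k + 1)) else PEquivL (cs k) (cs (k + 1)))
    (Js : ℕ → Matrix (OffI n m c) (OffI n m c) ℝ)
    (hJs : ∀ k ≤ ((Finset.range r).filter (· ∈ s)).card, Js k ∈ JopUBC n m c ρ (cs r)) :
    ∃ A J B, specNorm A ≤ 1 ∧ specNorm B ≤ 1 ∧ J ∈ JopUBC n m c ρ (cs 0) ∧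
      ((List.range (((Finset.range r).filter (· ∈ s)).card + 1)).map Js).prod = A * J * B := by
  induction r generalizing Js with
  | zero =>
    refine ⟨1, Js 0, 1, specNorm_one_le, specNorm_one_le, hJs 0 (by simp), ?_⟩
    simp
  | succ r ih =>
    have hstep_r := hstep r r.lt_succ_self
    have hstep' : ∀ k < r, _ := fun k hk => hstep k (Nat.lt_succ_of_lt hk)
    rw [Finset.range_add_one, Finset.filter_insert] at hJs ⊢
    split_ifs at hstep_r hJs ⊢ with hr
    · obtain ⟨l₁, l₂, hcr, hcr'⟩ := hstep_r
      rw [Finset.card_insert_of_notMem (by simp)] at hJs ⊢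
      rw [hcr'] at hJs
      obtain ⟨A, B, Js', hA, hB, hJs', hprod⟩ := exists_prod_eq_mul_prod_mul_of_append hJs
      obtain ⟨A', J, B', hA', hB', hJ, hprod'⟩ := ih hstep' Js' (hcr ▸ hJs')
      exact ⟨A * A', J, B' * B, specNorm_mul_le_one hA hA', specNorm_mul_le_one hB' hB, hJ,
        by rw [hprod, hprod']; simp only [Matrix.mul_assoc]⟩
    · rw [← JopUBC_eq_of_pEquivL hstep_r] at hJs
      exact ih hstep' Js hJs

end WeakEquivalence

theorem statement17_general (n m : ℕ) (c : ℕ → ℕ)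
    (ρ : ℝ)
    (L L' : List (ℕ × ℕ))
    (d : ℕ) (hchain : WeakChainD d L L')
    (μ : ℝ) (hμ : ∀ J ∈ JopUBC n m c ρ L, specNorm J ≤ μ) :
    ∀ Js : ℕ → Matrix (OffI n m c) (OffI n m c) ℝ,
      (∀ k ≤ d, Js k ∈ JopUBC n m c ρ L') →
      specNorm (((List.range (d + 1)).map Js).prod) ≤ μ := by
  obtain ⟨r, cs, s, rfl, rfl, rfl, hs, hstep⟩ := hchain
  intro Js hJs
  have hfilter : (Finset.range r).filter (· ∈ s) = s := by
    ext k
    simpa using fun hk => hs k hk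
  obtain ⟨A, J, B, hA, hB, hJ, hprod⟩ :=
    exists_prod_eq_mul_mul_of_chain cs s r hstep Js (by rwa [hfilter])
  rw [hfilter] at hprod
  rw [hprod]
  exact (specNorm_mul_mul_le hA hB).trans (hμ J hJ)

/-- Proposition 2.16: if `O' ~w O` via a chain containing exactly `d`
shift-equivalent adjacent pairs and `‖J‖₂ ≤ μ` for all `J ∈ J_O^{UBC_π(ρ)}`, then the
product of any `d+1` block Jacobi operators from `J_{O'}^{UBC_π(ρ)}` has spectral norm
at most `μ`. -/
theorem statement17 (n m : ℕ) (c : ℕ → ℕ) (hpart : IsPartition n m c)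
    (ρ : ℝ) (hρ0 : 0 < ρ) (hρ1 : ρ ≤ 1)
    (L L' : List (ℕ × ℕ)) (hL : SeqOn m L) (hL' : SeqOn m L')
    (d : ℕ) (hchain : WeakChainD d L L')
    (μ : ℝ) (hμ : ∀ J ∈ JopUBC n m c ρ L, specNorm J ≤ μ) :
    ∀ Js : ℕ → Matrix (OffI n m c) (OffI n m c) ℝ,
      (∀ k ≤ d, Js k ∈ JopUBC n m c ρ L') →
      specNorm (((List.range (d + 1)).map Js).prod) ≤ μ :=
  statement17_general n m c ρ L L' d hchain μ hμ
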